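/- arXiv:2307.15269 — 5 statements merged into one kernel-verified Lean document; each statement's English description precedes it below -/
import Mathlib

section
/- If a leader proposal L at round r is referenced by at least f+1 proposals at round r+1, then every proposal at round r+2 that links to at least 2f+1 proposals of round r+1 has L in its sub-DAG (i.e., there is a path of length 2 from that proposal to L). -/
/-- If a leader proposal `L` at round `r` is referenced by at least `f+1`
round-`(r+1)` proposals, then every round-`(r+2)` proposal linking at least
`2f+1` round-`(r+1)` proposals has `L` in its sub-DAG: there is a path of
length 2 from that proposal to `L`. -/
theorem leader_in_subdag {P : Type*} [DecidableEq P] (f : ℕ)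
    (edge : P → P → Prop)
    (R₁ : Finset P) (hR₁ : R₁.card ≤ 3 * f + 1)     -- round r+1 proposals
    (L : P)
    (followers : Finset P) (hfsub : followers ⊆ R₁)
    (hfoll : ∀ q ∈ followers, edge q L)
    (hfcard : f + 1 ≤ followers.card)
    (p : P)                                          -- a round r+2 proposal
    (links : Finset P) (hlsub : links ⊆ R₁)
    (hlinks : ∀ q ∈ links, edge p q)
    (hlcard : 2 * f + 1 ≤ links.card) :
    ∃ q ∈ links, edge p q ∧ edge q L := by
  have h : (followers ∩ links).Nonempty := by
    rw [← Finset.card_pos]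
    have hu : (followers ∪ links).card ≤ 3 * f + 1 :=
      le_trans (Finset.card_le_card (Finset.union_subset hfsub hlsub)) hR₁
    have := Finset.card_union_add_card_inter followers links
    omega
  obtain ⟨q, hq⟩ := h
  rw [Finset.mem_inter] at hq
  exact ⟨q, hq.2, hlinks q hq.2, hfoll q hq.1⟩
end

section
/- If every proposal at round r+1 includes all transactions having at least 2f+1 votes by round r (since any 2f+1 round-r proposals include at least one voter's proposal), then a transaction tx with at least 2f+1 votes at round r is contained in the sub-DAG of every proposal of round r+1 that links 2f+1 round-r proposals. -/
/-- With `N = 3f+1` nodes, if at least `2f+1` nodes have voted for `tx` by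
round `r` (their round-`r` sub-DAGs contain `tx`), then every round-`(r+1)`
proposal linking `2f+1` round-`r` proposals contains `tx` in its sub-DAG:
some linked round-`r` proposal belongs to a voter. -/
theorem tx_in_every_next_subdag {Node : Type*} [Fintype Node] [DecidableEq Node]
    (f : ℕ) (hcard : Fintype.card Node = 3 * f + 1)
    (voters : Finset Node)         -- nodes whose round-r sub-DAG contains tx
    (hv : 2 * f + 1 ≤ voters.card)
    (S : Finset Node)              -- nodes whose round-r proposals are linked
    (hS : 2 * f + 1 ≤ S.card) :
    ∃ i ∈ S, i ∈ voters := by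
  have h := Finset.card_union_le S voters
  have hle : S.card + voters.card ≤ S.card + voters.card := le_refl _
  have hcu : (S ∪ voters).card ≤ 3 * f + 1 := hcard ▸ Finset.card_le_univ _
  have : 0 < (S ∩ voters).card := by
    have := Finset.card_union_add_card_inter S voters
    omega
  obtain ⟨i, hi⟩ := Finset.card_pos.mp this
  exact ⟨i, (Finset.mem_inter.mp hi).1, (Finset.mem_inter.mp hi).2⟩
end

section
/- Fast-commit consistency: if at an odd round a node fast-commits tx because 2f+1 nodes voted for tx and it observed no conflicting transaction, and later a leader is chosen whose sub-DAG contains at least 2f+1 round-r proposals, then under the vote-majority commit rule the leader commits tx (not any conflicting transaction). -/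
/-- Fast-commit consistency: with `N = 3f+1` nodes each first-voting at most
one transaction among a conflicting set, if `tx` gets first-votes from at
least `2f+1` nodes, then within any leader sub-DAG `S` of size at least
`2f+1`, `tx` has at least `f+1` voters while every conflicting `tx'` has at
most `f`; hence the vote-majority commit rule commits `tx`, not a conflicting
transaction. -/
theorem fast_commit_consistency {Node Tx : Type*} [Fintype Node] [DecidableEq Node]
    (f : ℕ) (hcard : Fintype.card Node = 3 * f + 1)
    (conflicts : Tx → Tx → Prop)
    (firstVoters : Tx → Finset Node)
    (hone : ∀ t t', conflicts t t' → Disjoint (firstVoters t) (firstVoters t'))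
    (tx : Tx) (htx : 2 * f + 1 ≤ (firstVoters tx).card)
    (S : Finset Node) (hS : 2 * f + 1 ≤ S.card) :
    f + 1 ≤ (S ∩ firstVoters tx).card ∧
    ∀ tx', conflicts tx tx' →
      (S ∩ firstVoters tx').card ≤ f ∧
      (S ∩ firstVoters tx').card < (S ∩ firstVoters tx).card := by
  have hunion : (S ∪ firstVoters tx).card ≤ 3 * f + 1 := by
    rw [← hcard]; exact Finset.card_le_univ _
  have hmain : f + 1 ≤ (S ∩ firstVoters tx).card := by
    have := Finset.card_inter_add_card_union S (firstVoters tx)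
    omega
  refine ⟨hmain, fun tx' hc => ?_⟩
  have hdisj := hone tx tx' hc
  have h1 : (firstVoters tx).card + (firstVoters tx').card ≤ 3 * f + 1 := by
    rw [← Finset.card_union_of_disjoint hdisj, ← hcard]
    exact Finset.card_le_univ _
  have h2 : (S ∩ firstVoters tx').card ≤ (firstVoters tx').card :=
    Finset.card_le_card (Finset.inter_subset_right)
  omega
end

section
/- If two transactions t₁ and t₂ are non-conflicting and both externally valid in state U, and outputs are fresh, then t₂ is still externally valid after applying t₁, and applying them in either order yields the same state (commutativity of non-conflicting UTXO transactions). -/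
/-- Commutativity of non-conflicting UTXO transactions: if `t₁, t₂` are
non-conflicting, externally valid in `U`, and their outputs are fresh, then
`t₂` remains externally valid after applying `t₁`, and the two application
orders produce the same state. -/
theorem utxo_commute {Tx UTXO : Type*} [DecidableEq UTXO]
    (I O : Tx → Finset UTXO) (U : Finset UTXO) (t₁ t₂ : Tx)
    (h₁ : I t₁ ⊆ U) (h₂ : I t₂ ⊆ U)
    (hII : Disjoint (I t₁) (I t₂))
    (hO₁I₂ : Disjoint (O t₁) (I t₂)) (hO₂I₁ : Disjoint (O t₂) (I t₁))
    (hOO : Disjoint (O t₁) (O t₂))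
    (hO₁U : Disjoint (O t₁) U) (hO₂U : Disjoint (O t₂) U) :
    I t₂ ⊆ (U \ I t₁) ∪ O t₁ ∧
    ((((U \ I t₁) ∪ O t₁) \ I t₂) ∪ O t₂) =
      ((((U \ I t₂) ∪ O t₂) \ I t₁) ∪ O t₁) := by
  have d1 : ∀ x, x ∈ I t₁ → x ∈ I t₂ → False := fun x a b => Finset.disjoint_left.mp hII a b
  have d2 : ∀ x, x ∈ O t₁ → x ∈ I t₂ → False := fun x a b => Finset.disjoint_left.mp hO₁I₂ a b
  have d3 : ∀ x, x ∈ O t₂ → x ∈ I t₁ → False := fun x a b => Finset.disjoint_left.mp hO₂I₁ a b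
  constructor
  · intro x hx
    simp only [Finset.mem_union, Finset.mem_sdiff]
    exact Or.inl ⟨h₂ hx, fun h => d1 x h hx⟩
  · ext x
    simp only [Finset.mem_union, Finset.mem_sdiff]
    constructor
    · rintro (⟨(⟨hU, h1⟩ | hO1), h2⟩ | hO2)
      · tauto
      · exact Or.inr hO1
      · exact Or.inl ⟨Or.inr hO2, fun h => d3 x hO2 h⟩
    · rintro (⟨(⟨hU, h2⟩ | hO2), h1⟩ | hO1)
      · tauto
      · exact Or.inr hO2
      · exact Or.inl ⟨Or.inr hO1, fun h => d2 x hO1 h⟩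
end

section
/- Uniqueness of committed leader chain: if leaders are committed only when referenced by at least f+1 next-round proposals, and every proposal links 2f+1 previous-round proposals, then for any two committed leaders L at round r and L' at round r+2, L is an ancestor of L' in the DAG. -/
/-- Committed-leader chain: if leader `L` (round `r`) is referenced by at least
`f+1` round-`(r+1)` proposals and the committed leader `L'` (round `r+2`) links
at least `2f+1` round-`(r+1)` proposals, then `L` is an ancestor of `L'`. -/
theorem leader_chain_ancestry {P : Type*} [DecidableEq P] (f : ℕ)
    (edge : P → P → Prop)
    (R₁ : Finset P) (hR₁ : R₁.card ≤ 3 * f + 1)     -- round r+1 proposals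
    (L L' : P)
    (followers : Finset P) (hfsub : followers ⊆ R₁)
    (hfoll : ∀ q ∈ followers, edge q L)
    (hfcard : f + 1 ≤ followers.card)
    (links : Finset P) (hlsub : links ⊆ R₁)
    (hlinks : ∀ q ∈ links, edge L' q)
    (hlcard : 2 * f + 1 ≤ links.card) :
    Relation.TransGen edge L' L := by
  have hne : (followers ∩ links).Nonempty := by
    rw [← Finset.card_pos]
    have hu : (followers ∪ links).card ≤ 3 * f + 1 :=
      le_trans (Finset.card_le_card (Finset.union_subset hfsub hlsub)) hR₁
    have := Finset.card_union_add_card_inter followers links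
    omega
  obtain ⟨q, hq⟩ := hne
  rw [Finset.mem_inter] at hq
  exact Relation.TransGen.head (hlinks q hq.2) (Relation.TransGen.single (hfoll q hq.1))
end
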